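/- arXiv:1401.5502 — 4 statements merged into one kernel-verified Lean document; each statement's English description precedes it below -/
import Mathlib

section
/- Fix real numbers τ, T, t, x with t ≤ T < τ and T − t < τ − T, and define the heat kernel f_τ(x, s) = (τ − s)^{−1/2} · exp(−x²/(2(τ − s))) for s < τ. Then the Taylor series of s ↦ f_τ(x, s) around s = T, evaluated at t, converges absolutely and equals f_τ(x, t); that is, f_τ(x, t) = ∑_{i=0}^{∞} ((t − T)^i / i!) · (∂^i/∂s^i) f_τ(x, s)|_{s=T}. -/
/-!
The heat kernel `s ↦ f_τ(x, s)` is the restriction to the real axis of a function holomorphic on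
the half-plane `Re z < τ`. Its Taylor series at `T` therefore converges to it on the disc of
radius `τ - T` about `T` (Cauchy), and, being a power series, converges absolutely strictly inside
that disc; `t` lies inside because `T - t < τ - T`.
-/

open Complex Metric Nat

theorem summable_abs_pow_mul_of_summable_pow_mul {a : ℕ → ℝ} {x y : ℝ}
    (h : Summable fun n => x ^ n * a n) (hyx : |y| < |x|) :
    Summable fun n => |y ^ n * a n| := by
  obtain ⟨C, hC⟩ := h.tendsto_atTop_zero.abs.bddAbove_range
  have hx : 0 < |x| := (abs_nonneg y).trans_lt hyx
  have hq : |y| / |x| < 1 := (div_lt_one hx).2 hyx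
  refine .of_nonneg_of_le (fun n => abs_nonneg _) (fun n => ?_)
    ((summable_geometric_of_lt_one (by positivity) hq).mul_left C)
  calc |y ^ n * a n| = |x ^ n * a n| * (|y| / |x|) ^ n := by
        rw [abs_mul, abs_mul, abs_pow, abs_pow, div_pow]
        field_simp
    _ ≤ C * (|y| / |x|) ^ n := by gcongr; exact hC ⟨n, rfl⟩

theorem deriv_ofReal_comp (f : ℝ → ℝ) (s : ℝ) :
    deriv (fun y => (f y : ℂ)) s = deriv f s := by
  by_cases hf : DifferentiableAt ℝ f s
  · exact hf.hasDerivAt.ofReal_comp.deriv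
  · have hf' : ¬ DifferentiableAt ℝ (fun y => (f y : ℂ)) s := fun h =>
      hf ((reCLM.differentiableAt.comp s h).congr_of_eventuallyEq (.of_forall fun _ => by simp))
    rw [deriv_zero_of_not_differentiableAt hf, deriv_zero_of_not_differentiableAt hf', ofReal_zero]

theorem iteratedDeriv_ofReal_comp (f : ℝ → ℝ) (n : ℕ) (s : ℝ) :
    iteratedDeriv n (fun y => (f y : ℂ)) s = iteratedDeriv n f s := by
  induction n generalizing s with
  | zero => simp
  | succ n ih => rw [iteratedDeriv_succ, funext ih, deriv_ofReal_comp, iteratedDeriv_succ]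

theorem iteratedDeriv_comp_ofReal {g : ℂ → ℂ} {U : Set ℂ} (hU : IsOpen U)
    (hg : DifferentiableOn ℂ g U) (n : ℕ) {s : ℝ} (hs : (s : ℂ) ∈ U) :
    iteratedDeriv n (fun y : ℝ => g y) s = iteratedDeriv n g s := by
  induction n generalizing g with
  | zero => simp
  | succ n ih =>
    have hderiv : Set.EqOn (deriv fun y : ℝ => g y) (fun y : ℝ => deriv g y) (ofReal ⁻¹' U) :=
      fun y hy => ((hg.differentiableAt (hU.mem_nhds hy)).hasDerivAt.comp_ofReal).deriv
    rw [iteratedDeriv_succ', iteratedDeriv_succ',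
      hderiv.iteratedDeriv_of_isOpen (hU.preimage continuous_ofReal) n hs,
      ih (hg.deriv hU)]

theorem ofReal_mem_ball_iff {c r y : ℝ} : (y : ℂ) ∈ ball (c : ℂ) r ↔ y ∈ ball c r := by
  rw [mem_ball, mem_ball, Complex.dist_eq, ← ofReal_sub, norm_real, Real.dist_eq,
    Real.norm_eq_abs]

section TaylorSeries

variable {f : ℝ → ℝ} {g : ℂ → ℂ} {c r : ℝ}

theorem hasSum_taylorSeries_of_ofReal_eq (hg : DifferentiableOn ℂ g (ball (c : ℂ) r))
    (hfg : ∀ y ∈ ball c r, (f y : ℂ) = g y) {y : ℝ} (hy : y ∈ ball c r) :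
    HasSum (fun n => (y - c) ^ n / n ! * iteratedDeriv n f c) (f y) := by
  have hc : c ∈ ball c r := mem_ball_self (pos_of_mem_ball hy)
  have hderiv (n : ℕ) : iteratedDeriv n g c = iteratedDeriv n f c := by
    rw [← iteratedDeriv_comp_ofReal isOpen_ball hg n (ofReal_mem_ball_iff.2 hc),
      ← iteratedDeriv_ofReal_comp]
    exact Set.EqOn.iteratedDeriv_of_isOpen (fun y hy => (hfg y hy).symm) isOpen_ball n hc
  have H := hasSum_taylorSeries_on_ball hg (ofReal_mem_ball_iff.2 hy)
  rw [← hfg y hy] at H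
  rw [← hasSum_ofReal]
  convert! H using 2 with n
  rw [hderiv, smul_eq_mul, smul_eq_mul]
  push_cast
  ring

theorem summable_abs_taylorSeries_of_ofReal_eq (hg : DifferentiableOn ℂ g (ball (c : ℂ) r))
    (hfg : ∀ y ∈ ball c r, (f y : ℂ) = g y) {y : ℝ} (hy : y ∈ ball c r) :
    Summable fun n => |(y - c) ^ n / n ! * iteratedDeriv n f c| := by
  obtain ⟨ρ, hyρ, hρr⟩ := exists_between (mem_ball.1 hy)
  have hρ : c + ρ ∈ ball c r := by
    rwa [mem_ball, Real.dist_eq, add_sub_cancel_left, abs_of_pos (dist_nonneg.trans_lt hyρ)]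
  have hsum := (hasSum_taylorSeries_of_ofReal_eq hg hfg hρ).summable
  simp only [add_sub_cancel_left, div_mul_eq_mul_div, mul_div_assoc] at hsum
  simp only [div_mul_eq_mul_div, mul_div_assoc]
  refine summable_abs_pow_mul_of_summable_pow_mul hsum ?_
  rwa [abs_of_pos (dist_nonneg.trans_lt hyρ), ← Real.dist_eq]

end TaylorSeries

noncomputable def heatKernel (τ x s : ℝ) : ℝ :=
  (τ - s) ^ (-(1 : ℝ) / 2) * Real.exp (-x ^ 2 / (2 * (τ - s)))

noncomputable def complexHeatKernel (τ x : ℝ) (z : ℂ) : ℂ :=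
  ((τ : ℂ) - z) ^ (-(1 : ℂ) / 2) * Complex.exp (-(x : ℂ) ^ 2 / (2 * ((τ : ℂ) - z)))

theorem differentiableOn_complexHeatKernel (τ x : ℝ) :
    DifferentiableOn ℂ (complexHeatKernel τ x) {z | z.re < τ} := by
  intro z hz
  have hre : 0 < ((τ : ℂ) - z).re := by simpa using hz
  have hslit : (τ : ℂ) - z ∈ slitPlane := .inl hre
  apply DifferentiableAt.differentiableWithinAt
  unfold complexHeatKernel
  fun_prop (disch := simp [slitPlane_ne_zero hslit])

theorem ofReal_heatKernel (τ x : ℝ) {s : ℝ} (hs : s < τ) :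
    (heatKernel τ x s : ℂ) = complexHeatKernel τ x s := by
  have hpos : 0 ≤ τ - s := by linarith
  simp only [heatKernel, complexHeatKernel, ofReal_mul, ofReal_cpow hpos, ofReal_exp]
  push_cast
  ring_nf

theorem re_lt_of_mem_ball {c r : ℝ} {z : ℂ} (hz : z ∈ ball (c : ℂ) r) : z.re < c + r := by
  have := (re_le_norm (z - c)).trans_lt (mem_ball_iff_norm.1 hz)
  rw [sub_re, ofReal_re] at this
  linarith

theorem heatKernel_taylor_series_general (τ T t x : ℝ) (htT : t ≤ T)
    (hclose : T - t < τ - T) :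
    Summable (fun i : ℕ => |(t - T) ^ i / (Nat.factorial i : ℝ) *
      iteratedDeriv i
        (fun s => (τ - s) ^ (-(1 : ℝ) / 2) * Real.exp (-x ^ 2 / (2 * (τ - s)))) T|) ∧
    HasSum (fun i : ℕ => (t - T) ^ i / (Nat.factorial i : ℝ) *
      iteratedDeriv i
        (fun s => (τ - s) ^ (-(1 : ℝ) / 2) * Real.exp (-x ^ 2 / (2 * (τ - s)))) T)
      ((τ - t) ^ (-(1 : ℝ) / 2) * Real.exp (-x ^ 2 / (2 * (τ - t)))) := by
  have hg : DifferentiableOn ℂ (complexHeatKernel τ x) (ball (T : ℂ) (τ - T)) :=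
    (differentiableOn_complexHeatKernel τ x).mono fun z hz => by
      simpa using re_lt_of_mem_ball hz
  have hfg : ∀ y ∈ ball T (τ - T), (heatKernel τ x y : ℂ) = complexHeatKernel τ x y :=
    fun y hy => ofReal_heatKernel τ x (by simpa using re_lt_of_mem_ball (ofReal_mem_ball_iff.2 hy))
  have ht : t ∈ ball T (τ - T) := by
    rwa [mem_ball, Real.dist_eq, abs_of_nonpos (sub_nonpos.2 htT), neg_sub]
  exact ⟨summable_abs_taylorSeries_of_ofReal_eq hg hfg ht,
    hasSum_taylorSeries_of_ofReal_eq hg hfg ht⟩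

/-- For the heat kernel `f_τ(x, s) = (τ - s)^{-1/2} exp(-x²/(2(τ - s)))` with `t ≤ T < τ` and
`T - t < τ - T`, the Taylor series in the time variable around `s = T`, evaluated at `t`,
converges absolutely and sums to `f_τ(x, t)`. -/
theorem heatKernel_taylor_series (τ T t x : ℝ) (htT : t ≤ T) (hTτ : T < τ)
    (hclose : T - t < τ - T) :
    Summable (fun i : ℕ => |(t - T) ^ i / (Nat.factorial i : ℝ) *
      iteratedDeriv i
        (fun s => (τ - s) ^ (-(1 : ℝ) / 2) * Real.exp (-x ^ 2 / (2 * (τ - s)))) T|) ∧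
    HasSum (fun i : ℕ => (t - T) ^ i / (Nat.factorial i : ℝ) *
      iteratedDeriv i
        (fun s => (τ - s) ^ (-(1 : ℝ) / 2) * Real.exp (-x ^ 2 / (2 * (τ - s)))) T)
      ((τ - t) ^ (-(1 : ℝ) / 2) * Real.exp (-x ^ 2 / (2 * (τ - t)))) :=
  heatKernel_taylor_series_general τ T t x htT hclose
end

section
/- For every real number Δ > 0 there exists a constant α > 0 (depending only on Δ) such that for every integer L ≥ 1, ∑_{i=0}^{L} (binomial(L, i))^4 · (i! / (L!)²) · Δ^{2L − i} ≤ α^L / L^L. -/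
/-! Since `L.choose i ≤ 2 ^ L`, `i ! ≤ L !` and `Δ ^ (2L - i) ≤ (Δ + 1) ^ (2L)`, each of the
`L + 1 ≤ 2 ^ L` terms is at most `(16 (Δ + 1)²) ^ L / L !`. The elementary Stirling bound
`(L / e) ^ L ≤ L !`, read off from one term of the exponential series, then turns
`c ^ L / L !` into `(c e) ^ L / L ^ L`. -/

open Nat Real Finset

lemma pow_div_exp_one_pow_le_factorial (n : ℕ) : ((n : ℝ) / exp 1) ^ n ≤ n ! := by
  have h := pow_div_factorial_le_exp (x := (n : ℝ)) n.cast_nonneg n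
  rw [div_le_iff₀ (by positivity)] at h
  rw [div_pow, ← exp_nat_mul, mul_one, div_le_iff₀ (exp_pos _)]
  linarith

lemma pow_div_factorial_le_mul_exp_one_pow_div_pow {c : ℝ} (hc : 0 ≤ c) (n : ℕ) :
    c ^ n / n ! ≤ (c * exp 1) ^ n / (n : ℝ) ^ n := by
  rcases n.eq_zero_or_pos with rfl | hn
  · simp
  have hfac : (0 : ℝ) < ((n : ℝ) / exp 1) ^ n := by positivity
  calc c ^ n / n ! ≤ c ^ n / ((n : ℝ) / exp 1) ^ n :=
        div_le_div_of_nonneg_left (by positivity) hfac (pow_div_exp_one_pow_le_factorial n)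
    _ = (c * exp 1) ^ n / (n : ℝ) ^ n := by
        rw [div_pow, div_div_eq_mul_div, mul_pow]

lemma choose_pow_four_mul_factorial_div_mul_pow_le {L i : ℕ} (hi : i ≤ L) {Δ : ℝ} (hΔ : 0 ≤ Δ) :
    (L.choose i : ℝ) ^ 4 * ((i ! : ℝ) / (L ! : ℝ) ^ 2) * Δ ^ (2 * L - i)
      ≤ (16 * (Δ + 1) ^ 2) ^ L / L ! := by
  have hchoose : (L.choose i : ℝ) ^ 4 ≤ 16 ^ L := by
    calc (L.choose i : ℝ) ^ 4 ≤ ((2 : ℝ) ^ L) ^ 4 := by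
          gcongr; exact_mod_cast choose_le_two_pow L i
      _ = 16 ^ L := by rw [← pow_mul, mul_comm, pow_mul]; norm_num
  have hfactorial : (i ! : ℝ) / (L ! : ℝ) ^ 2 ≤ 1 / L ! := by
    have hL : (0 : ℝ) < L ! := by positivity
    rw [div_le_div_iff₀ (by positivity) hL, one_mul, sq]
    gcongr
  have hpow : Δ ^ (2 * L - i) ≤ ((Δ + 1) ^ 2) ^ L := by
    rw [← pow_mul]
    calc Δ ^ (2 * L - i) ≤ (Δ + 1) ^ (2 * L - i) := by gcongr; linarith
      _ ≤ (Δ + 1) ^ (2 * L) := pow_le_pow_right₀ (by linarith) (Nat.sub_le _ _)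
  calc (L.choose i : ℝ) ^ 4 * ((i ! : ℝ) / (L ! : ℝ) ^ 2) * Δ ^ (2 * L - i)
      ≤ 16 ^ L * (1 / L !) * ((Δ + 1) ^ 2) ^ L := by gcongr
    _ = (16 * (Δ + 1) ^ 2) ^ L / L ! := by rw [mul_pow]; ring

lemma sum_choose_pow_four_mul_factorial_div_mul_pow_le (L : ℕ) {Δ : ℝ} (hΔ : 0 ≤ Δ) :
    ∑ i ∈ range (L + 1), (L.choose i : ℝ) ^ 4 * ((i ! : ℝ) / (L ! : ℝ) ^ 2) * Δ ^ (2 * L - i)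
      ≤ (32 * (Δ + 1) ^ 2) ^ L / L ! := by
  calc ∑ i ∈ range (L + 1), (L.choose i : ℝ) ^ 4 * ((i ! : ℝ) / (L ! : ℝ) ^ 2) * Δ ^ (2 * L - i)
      ≤ ∑ _i ∈ range (L + 1), (16 * (Δ + 1) ^ 2) ^ L / L ! :=
        sum_le_sum fun i hi ↦
          choose_pow_four_mul_factorial_div_mul_pow_le (mem_range_succ_iff.mp hi) hΔ
    _ = (L + 1 : ℝ) * ((16 * (Δ + 1) ^ 2) ^ L / L !) := by simp
    _ ≤ 2 ^ L * ((16 * (Δ + 1) ^ 2) ^ L / L !) := by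
        gcongr; exact_mod_cast L.lt_two_pow_self
    _ = (32 * (Δ + 1) ^ 2) ^ L / L ! := by
        rw [mul_div_assoc', ← mul_pow, ← mul_assoc]; norm_num

/-- For every `Δ > 0` there is a constant `α > 0` such that for every `L ≥ 1`,
`∑_{i=0}^{L} (L choose i)⁴ (i! / (L!)²) Δ^{2L-i} ≤ α^L / L^L`. -/
theorem bte_remainder_bound (Δ : ℝ) (hΔ : 0 < Δ) :
    ∃ α : ℝ, 0 < α ∧ ∀ L : ℕ, 1 ≤ L →
      ∑ i ∈ Finset.range (L + 1),
          (Nat.choose L i : ℝ) ^ 4 * ((Nat.factorial i : ℝ) / (Nat.factorial L : ℝ) ^ 2) *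
            Δ ^ (2 * L - i)
        ≤ α ^ L / (L : ℝ) ^ L :=
  ⟨32 * (Δ + 1) ^ 2 * exp 1, by positivity, fun L _ ↦
    (sum_choose_pow_four_mul_factorial_div_mul_pow_le L hΔ.le).trans
      (pow_div_factorial_le_mul_exp_one_pow_div_pow (by positivity) L)⟩
end

section
/- For all real numbers c > 0 and Δ > 0, the sequence a_L := ∑_{i=0}^{L} c^{2(2L − i)} · (binomial(L, i))^4 · (i! / (L!)²) · Δ^{2L − i} tends to 0 as L → ∞. (This shows the summability condition of the backward Taylor expansion theorem holds whenever the L²-norms of the iterated Malliavin derivatives of order L are bounded by c^L.) -/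
/-!
With `t = c²Δ` the `i`-th summand is `t^(2L-i) (L choose i)⁴ i!/(L!)²`. Crude bounds
`(L choose i) ≤ 2^L`, `i! ≤ L!`, `|t|^(2L-i) ≤ max |t| 1 ^ (2L)` and `L + 1 ≤ 2^L` give
`|a_L| ≤ (32 max |t| 1 ²)^L / L!`, and `x^L / L! → 0` for every `x`.
-/

open Filter Finset Nat

namespace BackwardTaylor

noncomputable def weight (L i : ℕ) : ℝ :=
  (L.choose i : ℝ) ^ 4 * ((i ! : ℝ) / (L ! : ℝ) ^ 2)

lemma weight_nonneg (L i : ℕ) : 0 ≤ weight L i := by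
  unfold weight; positivity

lemma weight_le {L i : ℕ} (hi : i ≤ L) : weight L i ≤ 16 ^ L / L ! := by
  have hL : (0 : ℝ) < L ! := by exact_mod_cast L.factorial_pos
  have hchoose : (L.choose i : ℝ) ^ 4 ≤ 16 ^ L := by
    calc (L.choose i : ℝ) ^ 4 ≤ ((2 : ℝ) ^ L) ^ 4 := by
          gcongr; exact_mod_cast L.choose_le_two_pow i
      _ = 16 ^ L := by rw [← pow_mul, mul_comm, pow_mul]; norm_num
  have hfact : (i ! : ℝ) / (L ! : ℝ) ^ 2 ≤ 1 / L ! := by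
    rw [div_le_div_iff₀ (by positivity) hL, one_mul, sq]
    gcongr
  calc weight L i ≤ 16 ^ L * (1 / L !) := by unfold weight; gcongr
    _ = 16 ^ L / L ! := mul_one_div _ _

lemma abs_pow_le_max_pow {t : ℝ} {m n : ℕ} (h : m ≤ n) : |t ^ m| ≤ max |t| 1 ^ n :=
  calc |t ^ m| = |t| ^ m := abs_pow t m
    _ ≤ max |t| 1 ^ m := by gcongr; exact le_max_left _ _
    _ ≤ max |t| 1 ^ n := pow_le_pow_right₀ (le_max_right _ _) h

lemma abs_sum_pow_mul_weight_le (t : ℝ) (L : ℕ) :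
    |∑ i ∈ range (L + 1), t ^ (2 * L - i) * weight L i|
      ≤ (32 * max |t| 1 ^ 2) ^ L / L ! := by
  have hterm : ∀ i ∈ range (L + 1),
      |t ^ (2 * L - i) * weight L i| ≤ max |t| 1 ^ (2 * L) * (16 ^ L / L !) := by
    intro i hi
    have hiL : i ≤ L := Nat.lt_succ_iff.mp (mem_range.mp hi)
    rw [abs_mul, abs_of_nonneg (weight_nonneg L i)]
    exact mul_le_mul (abs_pow_le_max_pow (Nat.sub_le _ _)) (weight_le hiL)
      (weight_nonneg L i) (by positivity)
  have hcard : ((L + 1 : ℕ) : ℝ) ≤ 2 ^ L := by exact_mod_cast Nat.lt_two_pow_self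
  calc |∑ i ∈ range (L + 1), t ^ (2 * L - i) * weight L i|
      ≤ ∑ i ∈ range (L + 1), |t ^ (2 * L - i) * weight L i| := abs_sum_le_sum_abs _ _
    _ ≤ (L + 1 : ℕ) * (max |t| 1 ^ (2 * L) * (16 ^ L / L !)) := by
      simpa using sum_le_card_nsmul _ _ _ hterm
    _ ≤ 2 ^ L * (max |t| 1 ^ (2 * L) * (16 ^ L / L !)) := by gcongr
    _ = (32 * max |t| 1 ^ 2) ^ L / L ! := by
      rw [mul_pow, pow_mul', show (32 : ℝ) = 2 * 16 by norm_num, mul_pow]; ring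

lemma tendsto_sum_pow_mul_weight (t : ℝ) :
    Tendsto (fun L : ℕ => ∑ i ∈ range (L + 1), t ^ (2 * L - i) * weight L i) atTop (nhds 0) :=
  squeeze_zero_norm (abs_sum_pow_mul_weight_le t)
    (FloorSemiring.tendsto_pow_div_factorial_atTop _)

end BackwardTaylor

theorem bte_remainder_tendsto_zero_general (c Δ : ℝ) :
    Filter.Tendsto
      (fun L : ℕ => ∑ i ∈ Finset.range (L + 1),
        c ^ (2 * (2 * L - i)) * (Nat.choose L i : ℝ) ^ 4 *
          ((Nat.factorial i : ℝ) / (Nat.factorial L : ℝ) ^ 2) * Δ ^ (2 * L - i))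
      Filter.atTop (nhds 0) := by
  convert BackwardTaylor.tendsto_sum_pow_mul_weight (c ^ 2 * Δ) using 3 with L i
  rw [BackwardTaylor.weight, mul_pow, ← pow_mul]
  ring

/-- For all `c > 0` and `Δ > 0`, the sequence
`a_L = ∑_{i=0}^{L} c^{2(2L-i)} (L choose i)⁴ (i!/(L!)²) Δ^{2L-i}` tends to `0` as `L → ∞`. -/
theorem bte_remainder_tendsto_zero (c Δ : ℝ) (hc : 0 < c) (hΔ : 0 < Δ) :
    Filter.Tendsto
      (fun L : ℕ => ∑ i ∈ Finset.range (L + 1),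
        c ^ (2 * (2 * L - i)) * (Nat.choose L i : ℝ) ^ 4 *
          ((Nat.factorial i : ℝ) / (Nat.factorial L : ℝ) ^ 2) * Δ ^ (2 * L - i))
      Filter.atTop (nhds 0) :=
  bte_remainder_tendsto_zero_general c Δ
end

section
/- Let M ∈ ℝ, σ > 0, and let n be a natural number. Define F : ℝ → ℝ by F(x) = exp(−e^{M − σx}). Then the iterated derivative of order 2n of F satisfies, for all x ∈ ℝ: F^{(2n)}(x) = F(x) · σ^{2n} · ∑_{i=0}^{2n} (−1)^i · S(2n, i) · e^{i(M − σx)}, where S(m, i) are the Stirling numbers of the second kind. -/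
/-!
Write `F(y) = g(M - σy)` with `g(u) = exp(-eᵘ)`. Since `g' = -eᵘ g`, induction gives
`g⁽ᵐ⁾ = g · Tₘ` with `Tₘ(u) = ∑ᵢ (-1)ⁱ S(m, i) e^{iu}`: the Stirling recurrence is exactly
`Tₘ₊₁ = Tₘ' - eᵘ Tₘ`. The affine change of variables contributes `(-σ)ᵐ`, which is `σᵐ` for
even `m`.
-/

/-- Stirling numbers of the second kind: `stirling2 m i` is the number of partitions of an
`m`-element set into `i` nonempty blocks. They satisfy `S(0,0) = 1`, `S(m,0) = 0` for `m > 0`,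
and `S(m+1, i) = i S(m, i) + S(m, i-1)`. -/
def stirling2 : ℕ → ℕ → ℕ
  | 0, 0 => 1
  | 0, _ + 1 => 0
  | _ + 1, 0 => 0
  | m + 1, i + 1 => (i + 1) * stirling2 m (i + 1) + stirling2 m i

open Finset Real

theorem stirling2_eq_stirlingSecond : stirling2 = Nat.stirlingSecond := by
  funext m i
  induction m generalizing i with
  | zero => cases i <;> rfl
  | succ m ih =>
    cases i with
    | zero => rfl
    | succ i => simp only [stirling2, Nat.stirlingSecond_succ_succ, ih]

theorem iteratedDeriv_comp_const_sub_mul {𝕜 : Type*} [NontriviallyNormedField 𝕜] {n : ℕ}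
    {f : 𝕜 → 𝕜} (hf : ContDiff 𝕜 n f) (a c x : 𝕜) :
    iteratedDeriv n (fun y => f (a - c * y)) x = (-c) ^ n * iteratedDeriv n f (a - c * x) := by
  have hsub : ContDiff 𝕜 n (fun z => f (a - z)) := hf.comp (contDiff_const.sub contDiff_id)
  rw [iteratedDeriv_comp_const_mul hsub, iteratedDeriv_comp_const_sub, neg_pow]
  simp only [smul_eq_mul]
  ring

noncomputable def stirlingExpSum (m : ℕ) (u : ℝ) : ℝ :=
  ∑ i ∈ range (m + 1), (-1) ^ i * (Nat.stirlingSecond m i : ℝ) * exp (i * u)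

theorem hasDerivAt_stirlingExpSum (m : ℕ) (u : ℝ) :
    HasDerivAt (stirlingExpSum m)
      (∑ i ∈ range (m + 1), (-1) ^ i * (Nat.stirlingSecond m i : ℝ) * i * exp (i * u)) u := by
  unfold stirlingExpSum
  refine HasDerivAt.fun_sum fun i _ => ?_
  simpa [mul_assoc, mul_comm, mul_left_comm] using
    ((hasDerivAt_id u).const_mul (i : ℝ)).exp.const_mul ((-1) ^ i * (Nat.stirlingSecond m i : ℝ))

theorem stirlingExpSum_succ (m : ℕ) (u : ℝ) :
    stirlingExpSum (m + 1) u = deriv (stirlingExpSum m) u - exp u * stirlingExpSum m u := by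
  set g : ℕ → ℝ := fun i => (-1) ^ i * (Nat.stirlingSecond m i : ℝ) * i * exp (i * u)
  have hshift : ∑ i ∈ range (m + 1), g i = ∑ k ∈ range (m + 1), g (k + 1) := by
    calc ∑ i ∈ range (m + 1), g i = ∑ i ∈ range (m + 2), g i := by
          simp [g, sum_range_succ _ (m + 1), Nat.stirlingSecond_eq_zero_of_lt (Nat.lt_succ_self m)]
      _ = _ := by simp [g, sum_range_succ' _ (m + 1)]
  rw [(hasDerivAt_stirlingExpSum m u).deriv, hshift, stirlingExpSum, stirlingExpSum, mul_sum,
    sum_range_succ' _ (m + 1), ← sum_sub_distrib]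
  simp only [g, Nat.stirlingSecond_succ_succ, Nat.stirlingSecond_succ_zero]
  push_cast
  simp only [mul_zero, zero_mul, add_zero]
  refine sum_congr rfl fun i _ => ?_
  rw [add_mul (i : ℝ) 1 u, one_mul, exp_add]
  ring

theorem iteratedDeriv_exp_neg_exp_eq (m : ℕ) (u : ℝ) :
    iteratedDeriv m (fun u => exp (-exp u)) u = exp (-exp u) * stirlingExpSum m u := by
  induction m generalizing u with
  | zero => simp [stirlingExpSum]
  | succ m ih =>
    have hF : HasDerivAt (fun u => exp (-exp u)) (exp (-exp u) * -exp u) u :=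
      (hasDerivAt_exp u).neg.exp
    rw [iteratedDeriv_succ, funext ih, (hF.fun_mul (hasDerivAt_stirlingExpSum m u)).deriv,
      stirlingExpSum_succ, (hasDerivAt_stirlingExpSum m u).deriv]
    ring

theorem iteratedDeriv_exp_neg_exp_general (M σ : ℝ) (n : ℕ) (x : ℝ) :
    iteratedDeriv (2 * n) (fun y => Real.exp (-Real.exp (M - σ * y))) x
      = Real.exp (-Real.exp (M - σ * x)) * σ ^ (2 * n) *
          ∑ i ∈ Finset.range (2 * n + 1),
            (-1 : ℝ) ^ i * (stirling2 (2 * n) i : ℝ) * Real.exp (i * (M - σ * x)) := by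
  rw [iteratedDeriv_comp_const_sub_mul (f := fun u => exp (-exp u)) (by fun_prop),
    iteratedDeriv_exp_neg_exp_eq, Even.neg_pow (even_two_mul n), stirling2_eq_stirlingSecond,
    stirlingExpSum]
  ring

/-- For `F(x) = exp(-e^{M - σx})`, the `2n`-th derivative is
`F(x) σ^{2n} ∑_{i=0}^{2n} (-1)^i S(2n, i) e^{i(M - σx)}`, where `S` are the Stirling numbers
of the second kind. -/
theorem iteratedDeriv_exp_neg_exp (M σ : ℝ) (hσ : 0 < σ) (n : ℕ) (x : ℝ) :
    iteratedDeriv (2 * n) (fun y => Real.exp (-Real.exp (M - σ * y))) x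
      = Real.exp (-Real.exp (M - σ * x)) * σ ^ (2 * n) *
          ∑ i ∈ Finset.range (2 * n + 1),
            (-1 : ℝ) ^ i * (stirling2 (2 * n) i : ℝ) * Real.exp (i * (M - σ * x)) :=
  iteratedDeriv_exp_neg_exp_general M σ n x
end
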